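/- arXiv:1609.05800 — 6 statements merged into one kernel-verified Lean document; each statement's English description precedes it below -/
import Mathlib

section
/- Let A be n×n, F be m×m, and g ∈ ℝ^m. Set H = I_m ⊗ A + F ⊗ I_n and G = g ⊗ I_n. Then there exists an invertible mn×mn matrix T such that the block matrix [G, HG, ..., H^{m−1}G] equals [g⊗I_n, (Fg)⊗I_n, ..., (F^{m−1}g)⊗I_n] · T. -/
open Matrix Kronecker

/-- Horizontal concatenation of `m` blocks, each an `mn × n` matrix, into an
`mn × mn` matrix. -/
def blockConcat {m n : ℕ} (X : Fin m → Matrix (Fin m × Fin n) (Unit × Fin n) ℝ) :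
    Matrix (Fin m × Fin n) (Fin m × Fin n) ℝ :=
  Matrix.of fun r c => X c.1 r ((), c.2)

/-!
`I_m ⊗ A` and `F ⊗ I_n` commute, so the binomial theorem gives
`H^k G = ∑_{j ≤ k} ((F^j g) ⊗ I_n) · C(k, j) A^(k-j)`. Hence `T` can be taken to be the block
matrix whose `(j, k)` block is `C(k, j) A^(k-j)`: it is block upper triangular with identity
diagonal blocks, so its determinant is `1`.
-/

namespace Matrix

variable {R ι κ : Type*} [CommRing R] [Fintype ι] [DecidableEq ι] [Fintype κ] [DecidableEq κ]

theorem kronecker_pow (A : Matrix ι ι R) (B : Matrix κ κ R) (k : ℕ) :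
    (A ⊗ₖ B) ^ k = (A ^ k) ⊗ₖ (B ^ k) := by
  induction k with
  | zero => simp
  | succ k ih => rw [pow_succ, pow_succ, pow_succ, ih, mul_kronecker_mul]

theorem commute_kronecker_one_one_kronecker (F : Matrix ι ι R) (A : Matrix κ κ R) :
    Commute (F ⊗ₖ (1 : Matrix κ κ R)) ((1 : Matrix ι ι R) ⊗ₖ A) := by
  simp only [Commute, SemiconjBy, ← mul_kronecker_mul, mul_one, one_mul]

theorem one_kronecker_add_kronecker_one_pow (A : Matrix κ κ R) (F : Matrix ι ι R) (k : ℕ) :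
    ((1 : Matrix ι ι R) ⊗ₖ A + F ⊗ₖ (1 : Matrix κ κ R)) ^ k =
      ∑ j ∈ Finset.range (k + 1), (F ^ j) ⊗ₖ ((k.choose j : R) • A ^ (k - j)) := by
  rw [add_comm, (commute_kronecker_one_one_kronecker F A).add_pow]
  refine Finset.sum_congr rfl fun j _ => ?_
  rw [kronecker_pow, kronecker_pow, one_pow, one_pow, ← mul_kronecker_mul, one_mul, mul_one,
    kronecker_smul, Nat.cast_smul_eq_nsmul, nsmul_eq_mul']

theorem one_kronecker_add_kronecker_one_pow_mul_replicateCol (A : Matrix κ κ R)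
    (F : Matrix ι ι R) (g : ι → R) {k N : ℕ} (hk : k < N) :
    ((1 : Matrix ι ι R) ⊗ₖ A + F ⊗ₖ (1 : Matrix κ κ R)) ^ k *
        (replicateCol Unit g ⊗ₖ (1 : Matrix κ κ R)) =
      ∑ j ∈ Finset.range N,
        replicateCol Unit (F ^ j *ᵥ g) ⊗ₖ ((k.choose j : R) • A ^ (k - j)) := by
  rw [one_kronecker_add_kronecker_one_pow, Matrix.sum_mul,
    Finset.sum_subset (Finset.range_subset_range.mpr hk) fun j _ hj => ?vanish]
  · refine Finset.sum_congr rfl fun j _ => ?_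
    rw [← mul_kronecker_mul, mul_one, replicateCol_mulVec]
  · rw [Finset.mem_range, not_lt] at hj
    rw [Nat.choose_eq_zero_of_lt hj, Nat.cast_zero, zero_smul, kronecker_zero, Matrix.zero_mul]

variable (m : ℕ) (A : Matrix κ κ R)

def binomialBlockMatrix : Matrix (Fin m × κ) (Fin m × κ) R :=
  comp (Fin m) (Fin m) κ κ R (of fun j k => ((k : ℕ).choose j : R) • A ^ ((k : ℕ) - j))

theorem blockTriangular_binomialBlockMatrix :
    (binomialBlockMatrix m A).BlockTriangular Prod.fst := by
  intro r c h
  simp [binomialBlockMatrix, Nat.choose_eq_zero_of_lt (Fin.lt_def.mp h)]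

theorem toSquareBlock_binomialBlockMatrix (k : Fin m) :
    (binomialBlockMatrix m A).toSquareBlock Prod.fst k = 1 := by
  ext ⟨⟨j, p⟩, hj⟩ ⟨⟨j', q⟩, hj'⟩
  simp only at hj hj'
  subst hj hj'
  simp [binomialBlockMatrix, toSquareBlock_def, one_apply]

theorem det_binomialBlockMatrix : (binomialBlockMatrix m A).det = 1 := by
  rw [(blockTriangular_binomialBlockMatrix m A).det_fintype]
  exact Finset.prod_eq_one fun k _ => by rw [toSquareBlock_binomialBlockMatrix, det_one]

theorem isUnit_binomialBlockMatrix : IsUnit (binomialBlockMatrix m A) := by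
  simp [isUnit_iff_isUnit_det, det_binomialBlockMatrix]

end Matrix

theorem blockConcat_replicateCol_kronecker_one_mul {m n : ℕ} (x : Fin m → Fin m → ℝ)
    (B : Matrix (Fin m × Fin n) (Fin m × Fin n) ℝ) :
    blockConcat (fun k => replicateCol Unit (x k) ⊗ₖ (1 : Matrix (Fin n) (Fin n) ℝ)) * B =
      blockConcat fun k => ∑ j, replicateCol Unit (x j) ⊗ₖ (comp _ _ _ _ ℝ).symm B j k := by
  ext r ⟨k, q⟩
  simp [blockConcat, mul_apply, Fintype.sum_prod_type, one_apply, Matrix.sum_apply]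

/-- There is an invertible `mn × mn` matrix `T` with
`[G, HG, …, H^{m-1}G] = [g⊗I_n, (Fg)⊗I_n, …, (F^{m-1}g)⊗I_n] T`, where
`H = I_m ⊗ A + F ⊗ I_n` and `G = g ⊗ I_n`. -/
theorem exists_T_blockConcat (m n : ℕ) (A : Matrix (Fin n) (Fin n) ℝ)
    (F : Matrix (Fin m) (Fin m) ℝ) (g : Fin m → ℝ) :
    ∃ T : Matrix (Fin m × Fin n) (Fin m × Fin n) ℝ, IsUnit T ∧
      blockConcat (fun k =>
          ((1 : Matrix (Fin m) (Fin m) ℝ) ⊗ₖ A + F ⊗ₖ (1 : Matrix (Fin n) (Fin n) ℝ)) ^ (k : ℕ) *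
            ((Matrix.of fun i (_ : Unit) => g i) ⊗ₖ (1 : Matrix (Fin n) (Fin n) ℝ))) =
        blockConcat (fun k =>
          (Matrix.of fun r (_ : Unit) => (F ^ (k : ℕ)).mulVec g r) ⊗ₖ
            (1 : Matrix (Fin n) (Fin n) ℝ)) * T := by
  have of_eq_replicateCol (v : Fin m → ℝ) :
      (of fun i (_ : Unit) => v i) = replicateCol Unit v := rfl
  refine ⟨binomialBlockMatrix m A, isUnit_binomialBlockMatrix m A, ?_⟩
  simp only [of_eq_replicateCol]
  rw [blockConcat_replicateCol_kronecker_one_mul]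
  congr 1
  funext k
  rw [one_kronecker_add_kronecker_one_pow_mul_replicateCol A F g k.isLt, Finset.sum_range]
  simp [binomialBlockMatrix]
end

section
/- Let N be a strongly connected directed graph on m ≥ 2 vertices, let S be a nonempty proper subset of the arc set, and let q ≤ m be the number of distinct vertices i that are heads of some arc in S. Let N* be the spanning subgraph of N obtained by deleting every arc whose head is a head of some arc in S. Then the underlying undirected graph of N* has at most q connected components, and hence the incidence matrix of N* has rank at least m − q. -/
/-!
Every vertex `v` is reachable in `N` from a head `x ∈ Q`. On such a path, the last
vertex in `Q` is joined to `v` by arcs whose heads all lie outside `Q`, i.e. by arcs of `N*`.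
So each component of `N*` meets `Q`, which gives at most `q` components. A vector in the kernel
of the incidence matrix takes equal values at both ends of every arc, hence is constant on
components; the kernel therefore has dimension at most `q`, and rank–nullity gives the bound.
-/

open LinearMap Matrix

theorem Quot.exists_mem_mk_eq_of_reflTransGen {α : Type*} {R r : α → α → Prop} {Q : Set α}
    (hR : ∀ u v, R u v → v ∉ Q → r u v) {x v : α} (hx : x ∈ Q)
    (h : Relation.ReflTransGen R x v) : ∃ y ∈ Q, Quot.mk r y = Quot.mk r v := by
  induction h with
  | refl => exact ⟨x, hx, rfl⟩
  | @tail u w _ huw ih =>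
    by_cases hw : w ∈ Q
    · exact ⟨w, hw, rfl⟩
    · obtain ⟨y, hy, hyu⟩ := ih
      exact ⟨y, hy, hyu.trans (Quot.sound (hR u w huw hw))⟩

section Incidence

variable {K : Type*} {κ n : Type*} [Fintype n]

theorem Matrix.apply_eq_of_mulVec_eq_zero_of_row_eq_single_sub_single [CommRing K] [DecidableEq n]
    {M : Matrix κ n K} {tail head : κ → n}
    (hM : ∀ a, M a = Pi.single (head a) 1 - Pi.single (tail a) 1)
    {x : n → K} (hx : M *ᵥ x = 0) (a : κ) : x (head a) = x (tail a) := by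
  have h : (Pi.single (head a) 1 - Pi.single (tail a) 1) ⬝ᵥ x = 0 := by
    rw [← hM]
    exact congrFun hx a
  rwa [sub_dotProduct, single_dotProduct, single_dotProduct, one_mul, one_mul, sub_eq_zero] at h

theorem Matrix.ker_mulVecLin_le_range_funLeft_quot [CommRing K] [DecidableEq n]
    {M : Matrix κ n K} {tail head : κ → n}
    (hM : ∀ a, M a = Pi.single (head a) 1 - Pi.single (tail a) 1)
    {r : n → n → Prop}
    (hr : ∀ i j, r i j → ∃ a, (tail a = i ∧ head a = j) ∨ (tail a = j ∧ head a = i)) :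
    ker M.mulVecLin ≤ range (funLeft K K (Quot.mk r)) := by
  intro x hx
  have hedge := apply_eq_of_mulVec_eq_zero_of_row_eq_single_sub_single hM (mem_ker.mp hx)
  have hresp : ∀ i j, r i j → x i = x j := by
    rintro i j hij
    obtain ⟨a, ⟨rfl, rfl⟩ | ⟨rfl, rfl⟩⟩ := hr i j hij
    · exact (hedge a).symm
    · exact hedge a
  exact ⟨Quot.lift x hresp, rfl⟩

theorem Matrix.card_sub_card_le_rank_of_ker_le_range_funLeft [Field K] {β : Type*} [Finite β]
    (M : Matrix κ n K) (f : n → β) (h : ker M.mulVecLin ≤ range (funLeft K K f)) :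
    Fintype.card n - Nat.card β ≤ M.rank := by
  have hker : Module.finrank K (ker M.mulVecLin) ≤ Nat.card β :=
    calc Module.finrank K (ker M.mulVecLin)
        ≤ Module.finrank K (range (funLeft K K f)) := Submodule.finrank_mono h
      _ ≤ Module.finrank K (β → K) := (funLeft K K f).finrank_range_le
      _ = Nat.card β := by
        have := Fintype.ofFinite β
        rw [Module.finrank_pi, Nat.card_eq_fintype_card]
  have hrn := finrank_range_add_finrank_ker M.mulVecLin
  rw [Module.finrank_fintype_fun_eq_card] at hrn
  change Fintype.card n - Nat.card β ≤ Module.finrank K (range M.mulVecLin)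
  omega

end Incidence

theorem deleted_head_subgraph_general (m : ℕ)
    (ι : Type)
    (tail head : ι → Fin m)
    (hsc : ∀ i j : Fin m,
      Relation.ReflTransGen (fun u v => ∃ a : ι, tail a = u ∧ head a = v) i j)
    (S : Finset ι) (hS : S.Nonempty)
    (Q : Finset (Fin m)) (hQ : Q = S.image head)
    (q : ℕ) (hq : q = Q.card)
    (Mstar : Matrix {a : ι // head a ∉ Q} (Fin m) ℝ)
    (hM : ∀ a : {a : ι // head a ∉ Q},
      Mstar a = (Pi.single (head a.1) 1 - Pi.single (tail a.1) 1 : Fin m → ℝ)) :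
    Nat.card (Quot fun i j : Fin m =>
        ∃ a : ι, head a ∉ Q ∧ ((tail a = i ∧ head a = j) ∨ (tail a = j ∧ head a = i))) ≤ q ∧
    m - q ≤ Mstar.rank := by
  set r : Fin m → Fin m → Prop := fun i j =>
    ∃ a : ι, head a ∉ Q ∧ ((tail a = i ∧ head a = j) ∨ (tail a = j ∧ head a = i))
  obtain ⟨a₀, ha₀⟩ := hS
  have hQ_mem : head a₀ ∈ Q := hQ ▸ Finset.mem_image_of_mem head ha₀
  have hstep : ∀ u w, (∃ a, tail a = u ∧ head a = w) → w ∉ (Q : Set (Fin m)) → r u w := by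
    rintro u w ⟨a, rfl, rfl⟩ hw
    exact ⟨a, hw, .inl ⟨rfl, rfl⟩⟩
  have hsurj : Function.Surjective fun x : Q => Quot.mk r x.1 := by
    rintro ⟨v⟩
    obtain ⟨x, hx, hxv⟩ := Quot.exists_mem_mk_eq_of_reflTransGen hstep hQ_mem (hsc (head a₀) v)
    exact ⟨⟨x, hx⟩, hxv⟩
  have hcomp : Nat.card (Quot r) ≤ q := by
    simpa [hq] using Nat.card_le_card_of_surjective _ hsurj
  refine ⟨hcomp, ?_⟩
  have hker : ker Mstar.mulVecLin ≤ range (funLeft ℝ ℝ (Quot.mk r)) :=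
    ker_mulVecLin_le_range_funLeft_quot hM fun _ _ ⟨a, ha, hij⟩ => ⟨⟨a, ha⟩, hij⟩
  have hrank := Mstar.card_sub_card_le_rank_of_ker_le_range_funLeft _ hker
  rw [Fintype.card_fin] at hrank
  omega

/-- Let `N` be a strongly connected directed graph on `m ≥ 2` vertices with
arcs indexed by `ι`, let `S` be a nonempty proper subset of the arcs, `Q` the
set of heads of arcs in `S`, and `q = |Q|`.  Let `N*` be the spanning subgraph
obtained by deleting every arc whose head lies in `Q`, with incidence matrix
`Mstar`.  Then the underlying undirected graph of `N*` has at most `q`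
connected components, and `rank Mstar ≥ m - q`. -/
theorem deleted_head_subgraph (m : ℕ) (hm : 2 ≤ m)
    (ι : Type) [Fintype ι] [DecidableEq ι]
    (tail head : ι → Fin m)
    (hsc : ∀ i j : Fin m,
      Relation.ReflTransGen (fun u v => ∃ a : ι, tail a = u ∧ head a = v) i j)
    (S : Finset ι) (hS : S.Nonempty) (hSproper : S ≠ Finset.univ)
    (Q : Finset (Fin m)) (hQ : Q = S.image head)
    (q : ℕ) (hq : q = Q.card)
    (Mstar : Matrix {a : ι // head a ∉ Q} (Fin m) ℝ)
    (hM : ∀ a : {a : ι // head a ∉ Q},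
      Mstar a = (Pi.single (head a.1) 1 - Pi.single (tail a.1) 1 : Fin m → ℝ)) :
    Nat.card (Quot fun i j : Fin m =>
        ∃ a : ι, head a ∉ Q ∧ ((tail a = i ∧ head a = j) ∨ (tail a = j ∧ head a = i))) ≤ q ∧
    m - q ≤ Mstar.rank :=
  deleted_head_subgraph_general m ι tail head hsc S hS Q hQ q hq Mstar hM
end

section
/- Let N be a strongly connected directed graph on m vertices with arc set J, and let C ⊂ J be a nonempty proper subset. Let B be the m×|C| matrix whose columns are e_i for each arc (j→i) ∈ C (indexed by heads of arcs in C), and let C̄-matrix be the |J∖C|×m matrix whose rows are c_{ij} = e_i' − e_j' for arcs (j→i) ∉ C. Then rank(C̄-matrix) + rank(B) ≥ m. -/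
/-!
The columns of `B` are the distinct unit vectors `e_h`, `h` a head of an arc of `C`, so
`rank B` is the number `q` of such heads. A vector `x` in the kernel of `Cbar` is constant
along every arc outside `C`; if it also vanishes at the heads of `C`, then it vanishes at
the head of every arc of `C` and, by strong connectivity, propagates this zero along paths
to every vertex. Hence the kernel of `Cbar` meets a subspace of codimension `q` trivially,
so it has dimension at most `q` and `rank Cbar ≥ m - q`.
-/

open Finset Matrix

namespace Matrix

variable {K m n : Type*} [Field K] [Fintype n]

theorem rank_eq_card_image_of_col_eq_single [DecidableEq n] {κ : Type*} [Fintype κ]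
    (B : Matrix n κ K) (f : κ → n) (hB : ∀ k, (fun i => B i k) = Pi.single (f k) 1) :
    B.rank = #(univ.image f) := by
  have hcols :
      Set.range B.col = Set.range fun i : univ.image f => (Pi.single (i : n) 1 : n → K) := by
    rw [show B.col = fun k => Pi.single (f k) 1 from funext hB]
    ext v
    simp
  have hli : LinearIndependent K fun i : univ.image f => (Pi.single (i : n) 1 : n → K) := by
    simpa [Function.comp_def] using
      (Pi.basisFun K n).linearIndependent.comp Subtype.val Subtype.val_injective
  rw [rank_eq_finrank_span_cols, hcols, finrank_span_eq_card hli, Fintype.card_coe]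

theorem card_le_rank_add_card_of_eq_zero_of_mulVec_eq_zero (A : Matrix m n K) (s : Finset n)
    (hA : ∀ x, A *ᵥ x = 0 → (∀ i ∈ s, x i = 0) → x = 0) :
    Fintype.card n ≤ A.rank + #s := by
  have hrestrict : Function.Injective
      ((LinearMap.funLeft K K ((↑) : s → n)).comp (LinearMap.ker A.mulVecLin).subtype) := by
    rw [← LinearMap.ker_eq_bot, LinearMap.ker_eq_bot']
    rintro ⟨x, hx⟩ hx0
    exact Subtype.ext <| hA x hx fun i hi => congrFun hx0 ⟨i, hi⟩
  have hker := LinearMap.finrank_le_finrank_of_injective hrestrict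
  have hrn := LinearMap.finrank_range_add_finrank_ker A.mulVecLin
  rw [Module.finrank_fintype_fun_eq_card, Fintype.card_coe] at hker
  rw [Module.finrank_fintype_fun_eq_card] at hrn
  rw [rank]
  omega

theorem mulVec_eq_sub_of_row_eq_single_sub_single {R : Type*} [Ring R] [DecidableEq n]
    (A : Matrix m n R) (h t : m → n)
    (hA : ∀ a, A a = Pi.single (h a) 1 - Pi.single (t a) 1) (x : n → R) :
    A *ᵥ x = fun a => x (h a) - x (t a) := by
  funext a
  change A a ⬝ᵥ x = _
  rw [hA, sub_dotProduct, single_dotProduct, single_dotProduct, one_mul, one_mul]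

end Matrix

theorem eq_zero_of_stronglyConnected {V ι α : Type*} [Zero α] (tail head : ι → V)
    (hsc : ∀ u v, Relation.ReflTransGen (fun u v => ∃ a, tail a = u ∧ head a = v) u v)
    (C : Set ι) (hC : C.Nonempty) (x : V → α)
    (hconst : ∀ a ∉ C, x (head a) = x (tail a)) (hzero : ∀ a ∈ C, x (head a) = 0) :
    x = 0 := by
  obtain ⟨a₀, ha₀⟩ := hC
  funext v
  induction hsc (head a₀) v with
  | refl => exact hzero a₀ ha₀
  | tail _ harc ih =>
    obtain ⟨a, rfl, rfl⟩ := harc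
    by_cases ha : a ∈ C
    · exact hzero a ha
    · rw [hconst a ha, ih]; rfl

theorem rank_incidence_plus_heads_general (m : ℕ)
    (ι : Type)
    (tail head : ι → Fin m)
    (hsc : ∀ i j : Fin m,
      Relation.ReflTransGen (fun u v => ∃ a : ι, tail a = u ∧ head a = v) i j)
    (C : Finset ι) (hC : C.Nonempty)
    (B : Matrix (Fin m) {a : ι // a ∈ C} ℝ)
    (hB : ∀ a : {a : ι // a ∈ C}, (fun i => B i a) = (Pi.single (head a.1) 1 : Fin m → ℝ))
    (Cbar : Matrix {a : ι // a ∉ C} (Fin m) ℝ)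
    (hCbar : ∀ a : {a : ι // a ∉ C},
      Cbar a = (Pi.single (head a.1) 1 - Pi.single (tail a.1) 1 : Fin m → ℝ)) :
    m ≤ Cbar.rank + B.rank := by
  rw [B.rank_eq_card_image_of_col_eq_single (fun a : C => head a.1) hB]
  set heads := univ.image fun a : C => head a.1
  suffices ∀ x, Cbar *ᵥ x = 0 → (∀ i ∈ heads, x i = 0) → x = 0 by
    simpa using Cbar.card_le_rank_add_card_of_eq_zero_of_mulVec_eq_zero heads this
  intro x hx hheads
  rw [mulVec_eq_sub_of_row_eq_single_sub_single Cbar _ _ hCbar] at hx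
  refine eq_zero_of_stronglyConnected tail head hsc C hC x (fun a ha => ?_) (fun a ha => ?_)
  · exact sub_eq_zero.mp (congrFun hx ⟨a, ha⟩)
  · exact hheads _ (mem_image_of_mem _ (mem_univ (⟨a, ha⟩ : C)))

/-- Let `N` be a strongly connected directed graph on `m` vertices with arc
set indexed by `ι`, and `C` a nonempty proper subset of the arcs.  Let `B` be
the `m × |C|` matrix whose column for arc `a ∈ C` is `e_{head a}`, and let
`Cbar` be the matrix whose row for each arc `a ∉ C` is
`e_{head a}' - e_{tail a}'`.  Then `rank Cbar + rank B ≥ m`. -/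
theorem rank_incidence_plus_heads (m : ℕ)
    (ι : Type) [Fintype ι] [DecidableEq ι]
    (tail head : ι → Fin m)
    (hsc : ∀ i j : Fin m,
      Relation.ReflTransGen (fun u v => ∃ a : ι, tail a = u ∧ head a = v) i j)
    (C : Finset ι) (hC : C.Nonempty) (hCproper : C ≠ Finset.univ)
    (B : Matrix (Fin m) {a : ι // a ∈ C} ℝ)
    (hB : ∀ a : {a : ι // a ∈ C}, (fun i => B i a) = (Pi.single (head a.1) 1 : Fin m → ℝ))
    (Cbar : Matrix {a : ι // a ∉ C} (Fin m) ℝ)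
    (hCbar : ∀ a : {a : ι // a ∉ C},
      Cbar a = (Pi.single (head a.1) 1 - Pi.single (tail a.1) 1 : Fin m → ℝ)) :
    m ≤ Cbar.rank + B.rank :=
  rank_incidence_plus_heads_general m ι tail head hsc C hC B hB Cbar hCbar
end

section
/- Let N be a strongly connected directed graph on m vertices with arc set J, and C ⊂ J nonempty and proper. With B and C̄ as above (B the block of head-indicator columns for arcs in C, C̄ the stack of incidence rows for arcs not in C), for every complex number λ the pencil matrix [[λI_m, B],[C̄, 0]] has rank at least m. -/
/-!
Vectors `(x, y)` in the kernel of `[[A, B], [C, 0]]` satisfy `C x = 0`, and those with `x = 0`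
satisfy `B y = 0`; so the nullity of the pencil is at most that of `C` plus that of `B`, and
its rank is at least `rank B + rank C` whatever the block `A = λ I` is. For the incidence
matrices, a vector in the kernels of both `C̄` and `Bᵀ` is constant along the arcs outside `C`
and vanishes at the heads of the arcs in `C`; by strong connectivity it vanishes, so
`rank C̄ + rank B ≥ m`.
-/

open Matrix Module LinearMap

theorem Submodule.finrank_map_add_finrank_inf_ker {K V V₂ : Type*} [DivisionRing K]
    [AddCommGroup V] [Module K V] [AddCommGroup V₂] [Module K V₂] [FiniteDimensional K V]
    (f : V →ₗ[K] V₂) (W : Submodule K V) :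
    finrank K (W.map f) + finrank K ↥(W ⊓ ker f) = finrank K W := by
  rw [← range_domRestrict, ← map_comap_subtype, finrank_map_subtype_eq, ← ker_domRestrict,
    finrank_range_add_finrank_ker]

namespace Matrix

variable {K : Type*} [Field K] {m n k l p : Type*}

theorem finrank_ker_fromBlocks_zero₂₂_le [Fintype n] [Fintype k]
    (A : Matrix m n K) (B : Matrix m k K) (C : Matrix l n K) :
    finrank K (ker (fromBlocks A B C 0).mulVecLin) ≤
      finrank K (ker C.mulVecLin) + finrank K (ker B.mulVecLin) := by
  set W := ker (fromBlocks A B C 0).mulVecLin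
  let left : (n ⊕ k → K) →ₗ[K] (n → K) := funLeft K K Sum.inl
  let right : (n ⊕ k → K) →ₗ[K] (k → K) := funLeft K K Sum.inr
  have hW : ∀ z ∈ W, A *ᵥ (z ∘ Sum.inl) + B *ᵥ (z ∘ Sum.inr) = 0 ∧ C *ᵥ (z ∘ Sum.inl) = 0 := by
    intro z hz
    rw [mem_ker, mulVecLin_apply, fromBlocks_mulVec, zero_mulVec, add_zero] at hz
    exact ⟨congrArg (· ∘ Sum.inl) hz, congrArg (· ∘ Sum.inr) hz⟩
  have hleft : W.map left ≤ ker C.mulVecLin := by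
    rintro _ ⟨z, hz, rfl⟩
    exact (hW z hz).2
  have hright : (W ⊓ ker left).map right ≤ ker B.mulVecLin := by
    rintro _ ⟨z, ⟨hz, hz₀ : z ∘ Sum.inl = 0⟩, rfl⟩
    have hBz := (hW z hz).1
    rw [hz₀, mulVec_zero, zero_add] at hBz
    exact hBz
  have hboth : W ⊓ ker left ⊓ ker right = ⊥ := by
    refine eq_bot_iff.2 fun z ⟨⟨_, hl⟩, hr⟩ => ?_
    ext (i | i)
    exacts [congrFun hl i, congrFun hr i]
  calc finrank K W
      = finrank K (W.map left) + finrank K ↥((W ⊓ ker left).map right) := by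
        rw [← W.finrank_map_add_finrank_inf_ker left,
          ← (W ⊓ ker left).finrank_map_add_finrank_inf_ker right, hboth, finrank_bot, add_zero]
    _ ≤ _ := add_le_add (Submodule.finrank_mono hleft) (Submodule.finrank_mono hright)

theorem rank_add_rank_le_rank_fromBlocks_zero₂₂ [Fintype n] [Fintype k]
    (A : Matrix m n K) (B : Matrix m k K) (C : Matrix l n K) :
    B.rank + C.rank ≤ (fromBlocks A B C 0).rank := by
  have hM := (fromBlocks A B C 0).mulVecLin.finrank_range_add_finrank_ker
  have hB := B.mulVecLin.finrank_range_add_finrank_ker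
  have hC := C.mulVecLin.finrank_range_add_finrank_ker
  simp only [finrank_pi, Fintype.card_sum] at hM hB hC
  have := finrank_ker_fromBlocks_zero₂₂_le A B C
  unfold rank
  omega

theorem card_le_rank_add_rank_of_disjoint_ker [Fintype n] {X : Matrix l n K} {Y : Matrix p n K}
    (h : Disjoint (ker X.mulVecLin) (ker Y.mulVecLin)) :
    Fintype.card n ≤ X.rank + Y.rank := by
  have hX := X.mulVecLin.finrank_range_add_finrank_ker
  have hY := Y.mulVecLin.finrank_range_add_finrank_ker
  have := Submodule.finrank_add_finrank_le_of_disjoint h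
  rw [finrank_pi] at hX hY this
  unfold rank
  omega

end Matrix

section Incidence

variable {V ι : Type*} {tail head : ι → V} {C : Finset ι}

theorem apply_eq_of_reflTransGen_arcs {α : Type*} {x : V → α} {c : α}
    (hin : ∀ a ∈ C, x (head a) = c) (hout : ∀ a ∉ C, x (head a) = x (tail a)) {u v : V}
    (huv : Relation.ReflTransGen (fun u v => ∃ a : ι, tail a = u ∧ head a = v) u v)
    (hu : x u = c) : x v = c := by
  induction huv with
  | refl => exact hu
  | tail _ hstep ih =>
    obtain ⟨a, rfl, rfl⟩ := hstep
    by_cases ha : a ∈ C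
    · exact hin a ha
    · rw [hout a ha, ih]

theorem disjoint_ker_incidence {K : Type*} [Field K] [Fintype V] [DecidableEq V]
    (hsc : ∀ i j : V,
      Relation.ReflTransGen (fun u v => ∃ a : ι, tail a = u ∧ head a = v) i j)
    (hC : C.Nonempty) {Bt : Matrix {a : ι // a ∈ C} V K}
    (hBt : ∀ a : {a : ι // a ∈ C}, Bt a = Pi.single (head a.1) 1)
    {Cbar : Matrix {a : ι // a ∉ C} V K}
    (hCbar : ∀ a : {a : ι // a ∉ C}, Cbar a = Pi.single (head a.1) 1 - Pi.single (tail a.1) 1) :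
    Disjoint (ker Cbar.mulVecLin) (ker Bt.mulVecLin) := by
  refine Submodule.disjoint_def.2 fun x hCx hBx => ?_
  have hout : ∀ a ∉ C, x (head a) = x (tail a) := fun a ha => by
    have hxa := congrFun (mem_ker.1 hCx) ⟨a, ha⟩
    rwa [mulVecLin_apply, Pi.zero_apply, mulVec, hCbar, sub_dotProduct, single_dotProduct,
      single_dotProduct, one_mul, one_mul, sub_eq_zero] at hxa
  have hin : ∀ a ∈ C, x (head a) = 0 := fun a ha => by
    have hxa := congrFun (mem_ker.1 hBx) ⟨a, ha⟩
    rwa [mulVecLin_apply, Pi.zero_apply, mulVec, hBt, single_dotProduct, one_mul] at hxa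
  obtain ⟨a₀, ha₀⟩ := hC
  funext v
  exact apply_eq_of_reflTransGen_arcs hin hout (hsc (head a₀) v) (hin a₀ ha₀)

end Incidence

theorem pencil_rank_ge_general (m : ℕ)
    (ι : Type)
    (tail head : ι → Fin m)
    (hsc : ∀ i j : Fin m,
      Relation.ReflTransGen (fun u v => ∃ a : ι, tail a = u ∧ head a = v) i j)
    (C : Finset ι) (hC : C.Nonempty)
    (B : Matrix (Fin m) {a : ι // a ∈ C} ℂ)
    (hB : ∀ a : {a : ι // a ∈ C}, (fun i => B i a) = (Pi.single (head a.1) 1 : Fin m → ℂ))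
    (Cbar : Matrix {a : ι // a ∉ C} (Fin m) ℂ)
    (hCbar : ∀ a : {a : ι // a ∉ C},
      Cbar a = (Pi.single (head a.1) 1 - Pi.single (tail a.1) 1 : Fin m → ℂ)) :
    ∀ lam : ℂ,
      m ≤ (Matrix.fromBlocks (lam • (1 : Matrix (Fin m) (Fin m) ℂ)) B Cbar 0).rank := by
  intro lam
  calc m = Fintype.card (Fin m) := (Fintype.card_fin m).symm
    _ ≤ Cbar.rank + Bᵀ.rank :=
      card_le_rank_add_rank_of_disjoint_ker (disjoint_ker_incidence hsc hC hB hCbar)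
    _ = B.rank + Cbar.rank := by rw [rank_transpose, add_comm]
    _ ≤ _ := rank_add_rank_le_rank_fromBlocks_zero₂₂ _ B Cbar

/-- With `N` a strongly connected directed graph on `m` vertices, `C` a
nonempty proper subset of the arcs, `B` the matrix of head-indicator columns
`e_{head a}` for arcs `a ∈ C`, and `Cbar` the stack of incidence rows
`e_{head a}' - e_{tail a}'` for arcs `a ∉ C`, the pencil
`[[λI, B], [Cbar, 0]]` has rank at least `m` for every complex `λ`. -/
theorem pencil_rank_ge (m : ℕ)
    (ι : Type) [Fintype ι] [DecidableEq ι]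
    (tail head : ι → Fin m)
    (hsc : ∀ i j : Fin m,
      Relation.ReflTransGen (fun u v => ∃ a : ι, tail a = u ∧ head a = v) i j)
    (C : Finset ι) (hC : C.Nonempty) (hCproper : C ≠ Finset.univ)
    (B : Matrix (Fin m) {a : ι // a ∈ C} ℂ)
    (hB : ∀ a : {a : ι // a ∈ C}, (fun i => B i a) = (Pi.single (head a.1) 1 : Fin m → ℂ))
    (Cbar : Matrix {a : ι // a ∉ C} (Fin m) ℂ)
    (hCbar : ∀ a : {a : ι // a ∉ C},
      Cbar a = (Pi.single (head a.1) 1 - Pi.single (tail a.1) 1 : Fin m → ℂ)) :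
    ∀ lam : ℂ,
      m ≤ (Matrix.fromBlocks (lam • (1 : Matrix (Fin m) (Fin m) ℂ)) B Cbar 0).rank :=
  pencil_rank_ge_general m ι tail head hsc C hC B hB Cbar hCbar
end

section
/- Let F be an m×m matrix and let p ∈ {1,...,m}. If (F, e_p) is a controllable pair, then with H = I_m ⊗ A + F ⊗ I_n for any n×n matrix A, and B_p = e_p ⊗ I_n, the pair (H, B_p) is controllable, i.e., the columns of B_p, HB_p, ..., H^{mn−1}B_p span ℝ^{mn}; moreover already B_p, HB_p, ..., H^{m−1}B_p span ℝ^{mn}. -/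
/-!
With `T i w = F^i e_p ⊗ w`, the identity `H (v ⊗ w) = v ⊗ A w + F v ⊗ w` reads
`H ∘ T i = T i ∘ A + T (i+1)`, and `T 0 = B_p`. By induction `H^k B_p - T k` has range in
`span (T 0, …, T (k-1))`, so the first `k` Krylov blocks of `(H, B_p)` span the same subspace as
`T 0, …, T (k-1)`. For `k = m` that subspace contains `v ⊗ w` for every `v` in the Krylov space
of `(F, e_p)`, which is all of `ℝ^m`, so it is everything.
-/

open Matrix Kronecker

/-- `H = I_m ⊗ A + F ⊗ I_n`. -/
def Hmat (m n : ℕ) (A : Matrix (Fin n) (Fin n) ℝ) (F : Matrix (Fin m) (Fin m) ℝ) :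
    Matrix (Fin m × Fin n) (Fin m × Fin n) ℝ :=
  (1 : Matrix (Fin m) (Fin m) ℝ) ⊗ₖ A + F ⊗ₖ (1 : Matrix (Fin n) (Fin n) ℝ)

/-- `B_p = e_p ⊗ I_n`. -/
def Bpmat (m n : ℕ) (p : Fin m) : Matrix (Fin m × Fin n) (Unit × Fin n) ℝ :=
  (Matrix.of fun r (_ : Unit) => if r = p then (1 : ℝ) else 0) ⊗ₖ
    (1 : Matrix (Fin n) (Fin n) ℝ)

theorem Matrix.mulVecLin_pow {R n : Type*} [CommSemiring R] [Fintype n] [DecidableEq n]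
    (M : Matrix n n R) (k : ℕ) : (M ^ k).mulVecLin = M.mulVecLin ^ k := by
  rw [← toLin'_apply', toLin'_pow, toLin'_apply']

theorem iSup_fin_eq_iSup_lt {α : Type*} [CompleteLattice α] (f : ℕ → α) (k : ℕ) :
    ⨆ i : Fin k, f i = ⨆ i < k, f i :=
  le_antisymm (iSup_le fun i => le_iSup₂_of_le i.1 i.2 le_rfl)
    (iSup₂_le fun i hi => le_iSup_of_le ⟨i, hi⟩ le_rfl)

namespace LinearMap

variable {R M N : Type*} [Ring R] [AddCommGroup M] [Module R M] [AddCommGroup N] [Module R N]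

theorem sup_range_eq_of_range_sub_le {V : Submodule R M} {f g : N →ₗ[R] M}
    (h : range (f - g) ≤ V) : V ⊔ range f = V ⊔ range g := by
  have hf : range f ≤ V ⊔ range g := by
    simpa using (range_add_le (f - g) g).trans (sup_le_sup_right h _)
  have hg : range g ≤ V ⊔ range f := by
    have h' : range (g - f) ≤ V := by rwa [← neg_sub, range_neg]
    simpa using (range_add_le (g - f) f).trans (sup_le_sup_right h' _)
  exact le_antisymm (sup_le le_sup_left hf) (sup_le le_sup_left hg)

variable {H : Module.End R M} {A : Module.End R N} {T : ℕ → N →ₗ[R] M}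

theorem map_iSup_range_le (hT : ∀ i, H ∘ₗ T i = T i ∘ₗ A + T (i + 1)) (k : ℕ) :
    (⨆ i < k, range (T i)).map H ≤ ⨆ i < k + 1, range (T i) := by
  simp only [Submodule.map_iSup]
  refine iSup₂_le fun i hi => ?_
  rw [← range_comp, hT]
  exact (range_add_le _ _).trans (sup_le ((range_comp_le_range _ _).trans
    (le_iSup₂_of_le i (by omega) le_rfl)) (le_iSup₂_of_le (i + 1) (by omega) le_rfl))

theorem range_pow_comp_sub_le (hT : ∀ i, H ∘ₗ T i = T i ∘ₗ A + T (i + 1)) (k : ℕ) :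
    range ((H ^ k) ∘ₗ T 0 - T k) ≤ ⨆ i < k, range (T i) := by
  induction k with
  | zero => simp [Module.End.one_eq_id]
  | succ k ih =>
    have hstep : (H ^ (k + 1)) ∘ₗ T 0 - T (k + 1) = H ∘ₗ ((H ^ k) ∘ₗ T 0 - T k) + T k ∘ₗ A := by
      rw [pow_succ', Module.End.mul_eq_comp, comp_sub, hT, comp_assoc]
      abel
    rw [hstep]
    refine (range_add_le _ _).trans (sup_le ?_ ?_)
    · rw [range_comp]
      exact (Submodule.map_mono ih).trans (map_iSup_range_le hT k)
    · exact (range_comp_le_range _ _).trans (le_iSup₂_of_le k k.lt_succ_self le_rfl)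

theorem iSup_range_pow_comp_eq (hT : ∀ i, H ∘ₗ T i = T i ∘ₗ A + T (i + 1)) (k : ℕ) :
    ⨆ i : Fin k, range ((H ^ (i : ℕ)) ∘ₗ T 0) = ⨆ i : Fin k, range (T i) := by
  rw [iSup_fin_eq_iSup_lt (fun i => range ((H ^ i) ∘ₗ T 0)),
    iSup_fin_eq_iSup_lt (fun i => range (T i))]
  induction k with
  | zero => simp
  | succ k ih =>
    rw [Nat.iSup_lt_succ, Nat.iSup_lt_succ, ih]
    exact sup_range_eq_of_range_sub_le (range_pow_comp_sub_le hT k)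

end LinearMap

section Kronecker

variable {R m n : Type*} [CommSemiring R] [Fintype n] [DecidableEq n]

theorem replicateCol_kronecker_one_mulVec (v : m → R) (x : Unit × n → R) :
    (replicateCol Unit v ⊗ₖ (1 : Matrix n n R)) *ᵥ x = fun ql => v ql.1 * x ((), ql.2) := by
  ext ⟨q, l⟩
  simp [mulVec, dotProduct, Fintype.sum_prod_type, one_apply]

theorem iSup_range_replicateCol_kronecker_one_eq_top [Fintype m] [DecidableEq m] {ι : Type*}
    (v : ι → m → R) (hv : ⨆ i, Submodule.span R {v i} = ⊤) :
    ⨆ i, LinearMap.range (replicateCol Unit (v i) ⊗ₖ (1 : Matrix n n R)).mulVecLin = ⊤ := by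
  set S := ⨆ i, LinearMap.range (replicateCol Unit (v i) ⊗ₖ (1 : Matrix n n R)).mulVecLin
  let Φ (x : Unit × n → R) : (m → R) →ₗ[R] m × n → R :=
    LinearMap.pi fun ql => x ((), ql.2) • LinearMap.proj ql.1
  have hΦ : ∀ x w, Φ x w = (replicateCol Unit w ⊗ₖ (1 : Matrix n n R)) *ᵥ x := fun x w => by
    rw [replicateCol_kronecker_one_mulVec]
    ext ql
    simp [Φ, mul_comm]
  have hΦS : ∀ x w, Φ x w ∈ S := by
    intro x w
    have hw : w ∈ ⨆ i, Submodule.span R {v i} := hv ▸ Submodule.mem_top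
    refine (?_ : Submodule.map (Φ x) (⨆ i, Submodule.span R {v i}) ≤ S) ⟨w, hw, rfl⟩
    rw [Submodule.map_iSup]
    refine iSup_mono fun i => ?_
    rw [Submodule.map_span, Set.image_singleton, Submodule.span_le, Set.singleton_subset_iff, hΦ]
    exact ⟨x, rfl⟩
  rw [eq_top_iff, ← (Pi.basisFun R (m × n)).span_eq, Submodule.span_le]
  rintro _ ⟨⟨q, j⟩, rfl⟩
  have hsingle : Pi.basisFun R (m × n) (q, j) = Φ (Pi.single ((), j) 1) (Pi.single q 1) := by
    ext ⟨q', l⟩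
    by_cases hl : l = j <;> simp [Φ, Pi.single_apply, hl]
  exact hsingle ▸ hΦS _ _

end Kronecker

theorem Hmat_mul_replicateCol_kronecker_one (m n : ℕ) (A : Matrix (Fin n) (Fin n) ℝ)
    (F : Matrix (Fin m) (Fin m) ℝ) (v : Fin m → ℝ) :
    Hmat m n A F * (replicateCol Unit v ⊗ₖ (1 : Matrix (Fin n) (Fin n) ℝ)) =
      (replicateCol Unit v ⊗ₖ (1 : Matrix (Fin n) (Fin n) ℝ)) * ((1 : Matrix Unit Unit ℝ) ⊗ₖ A) +
        replicateCol Unit (F *ᵥ v) ⊗ₖ (1 : Matrix (Fin n) (Fin n) ℝ) := by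
  rw [Hmat, Matrix.add_mul, ← mul_kronecker_mul, ← mul_kronecker_mul, ← mul_kronecker_mul,
    replicateCol_mulVec]
  simp only [Matrix.one_mul, Matrix.mul_one]

theorem Bpmat_eq_replicateCol_kronecker_one (m n : ℕ) (p : Fin m) :
    Bpmat m n p = replicateCol Unit (Pi.single p 1) ⊗ₖ (1 : Matrix (Fin n) (Fin n) ℝ) := by
  rw [Bpmat]
  congr 1
  ext r u
  simp [replicateCol_apply, Pi.single_apply]

/-- If `(F, e_p)` is a controllable pair, then `(H, B_p)` is controllable,
i.e. the columns of `B_p, HB_p, …, H^{mn-1}B_p` span `ℝ^{mn}`; moreover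
already `B_p, HB_p, …, H^{m-1}B_p` span `ℝ^{mn}`. -/
theorem controllable_pair_kron (m n : ℕ)
    (A : Matrix (Fin n) (Fin n) ℝ) (F : Matrix (Fin m) (Fin m) ℝ) (p : Fin m)
    (hctrb : (⨆ k : Fin m,
        (Submodule.span ℝ {(F ^ (k : ℕ)).mulVec (Pi.single p 1)})) = ⊤) :
    (⨆ k : Fin (m * n),
        LinearMap.range (((Hmat m n A F) ^ (k : ℕ)).mulVecLin.comp
          (Bpmat m n p).mulVecLin)) = ⊤ ∧
    (⨆ k : Fin m,
        LinearMap.range (((Hmat m n A F) ^ (k : ℕ)).mulVecLin.comp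
          (Bpmat m n p).mulVecLin)) = ⊤ := by
  obtain rfl | hn := n.eq_zero_or_pos
  · exact ⟨Subsingleton.elim _ _, Subsingleton.elim _ _⟩
  -- `C i = F^i e_p ⊗ I_n`
  set C : ℕ → Matrix (Fin m × Fin n) (Unit × Fin n) ℝ :=
    fun i => replicateCol Unit ((F ^ i) *ᵥ Pi.single p 1) ⊗ₖ (1 : Matrix (Fin n) (Fin n) ℝ)
  have hT : ∀ i, (Hmat m n A F).mulVecLin ∘ₗ (C i).mulVecLin =
      (C i).mulVecLin ∘ₗ ((1 : Matrix Unit Unit ℝ) ⊗ₖ A).mulVecLin + (C (i + 1)).mulVecLin := by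
    intro i
    rw [← mulVecLin_mul, ← mulVecLin_mul, ← mulVecLin_add, Hmat_mul_replicateCol_kronecker_one]
    simp only [C, pow_succ', ← mulVec_mulVec]
  have hC0 : (C 0).mulVecLin = (Bpmat m n p).mulVecLin := by
    simp only [C, pow_zero, one_mulVec, Bpmat_eq_replicateCol_kronecker_one]
  have hKrylov : ∀ k, ⨆ i : Fin k, LinearMap.range
      (((Hmat m n A F) ^ (i : ℕ)).mulVecLin ∘ₗ (Bpmat m n p).mulVecLin) =
        ⨆ i : Fin k, LinearMap.range (C i).mulVecLin := by
    intro k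
    simp only [mulVecLin_pow, ← hC0]
    exact LinearMap.iSup_range_pow_comp_eq hT k
  have hfull : ⨆ i : Fin m, LinearMap.range (C i).mulVecLin = ⊤ :=
    iSup_range_replicateCol_kronecker_one_eq_top _ hctrb
  refine ⟨eq_top_iff.2 ?_, (hKrylov m).trans hfull⟩
  rw [hKrylov, ← hfull]
  exact iSup_le fun i => le_iSup_of_le ⟨i, i.2.trans_le (Nat.le_mul_of_pos_right m hn)⟩ le_rfl
end

section
/- Suppose a linear system ẋ = Ax with output y = Cx admits matrices H, K, M, N, V satisfying I = MV + NC and VA = HV + KC. Then for the observer ż = Hz + Ky, x̂ = Mz + Ny, the signal ε = z − Vx satisfies ε̇ = Hε, and the estimation error satisfies x̂ − x = Mε. In particular, if H is a stability matrix (all eigenvalues have negative real part), then x̂(t) − x(t) → 0 as t → ∞ for all initializations. -/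
/-! The identities `ε̇ = Hε` and `x̂ - x = Mε` are direct computations with `VA = HV + KC` and
`MV + NC = I`. For the limit, complexify: by uniqueness of solutions of linear ODEs,
`ε(t) = exp(tH) ε(0)`, and `ℂⁿ` is spanned by generalized eigenvectors of `H`. On a generalized
eigenvector `v` for `μ` the exponential series of `t(H - μ)` terminates, so `exp(tH) v` is
`e^{μt}` times a polynomial in `t`, which tends to `0` since `Re μ < 0`. -/

open Matrix NormedSpace Filter Topology
open scoped Nat

theorem Real.tendsto_pow_mul_exp_mul_atTop_nhds_zero {b : ℝ} (hb : b < 0) (k : ℕ) :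
    Tendsto (fun t : ℝ => t ^ k * Real.exp (b * t)) atTop (𝓝 0) := by
  refine (isLittleO_pow_exp_pos_mul_atTop k (neg_pos.2 hb)).tendsto_div_nhds_zero.congr
    fun t => ?_
  rw [div_eq_mul_inv, ← Real.exp_neg, neg_mul, neg_neg]

theorem Complex.tendsto_pow_mul_exp_mul_atTop_nhds_zero {μ : ℂ} (hμ : μ.re < 0) (k : ℕ) :
    Tendsto (fun t : ℝ => (t : ℂ) ^ k * Complex.exp (μ * t)) atTop (𝓝 0) := by
  rw [tendsto_zero_iff_norm_tendsto_zero]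
  refine (Real.tendsto_pow_mul_exp_mul_atTop_nhds_zero hμ k).congr' ?_
  filter_upwards [eventually_ge_atTop 0] with t ht
  rw [norm_mul, Complex.norm_exp, norm_pow, Complex.norm_real, Real.norm_of_nonneg ht,
    Complex.re_mul_ofReal]

section
variable {E : Type*} [NormedAddCommGroup E] [NormedSpace ℂ E] [CompleteSpace E]

theorem exp_apply_eq_sum_of_pow_apply_eq_zero {b : E →L[ℂ] E} {v : E} {k : ℕ}
    (hk : (b ^ k) v = 0) : exp b v = ∑ i ∈ Finset.range k, (i ! : ℂ)⁻¹ • (b ^ i) v := by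
  refine (((exp_series_hasSum_exp' (𝕂 := ℂ) b).mapL
    (ContinuousLinearMap.apply ℂ E v)).tsum_eq.symm.trans (tsum_eq_sum fun i hi => ?_))
  obtain ⟨j, rfl⟩ := Nat.exists_eq_add_of_le (not_lt.1 (Finset.mem_range.not.1 hi))
  rw [add_comm, pow_add]
  simp only [ContinuousLinearMap.apply_apply, _root_.smul_apply, mul_apply_eq_comp, hk, map_zero,
    smul_zero]

theorem tendsto_exp_smul_apply_of_pow_sub_smul_apply_eq_zero (a : E →L[ℂ] E) {μ : ℂ}
    (hμ : μ.re < 0) {v : E} {k : ℕ} (hk : ((a - μ • 1) ^ k) v = 0) :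
    Tendsto (fun t : ℝ => exp (t • a) v) atTop (𝓝 0) := by
  set N := a - μ • 1
  have hexp : ∀ t : ℝ, exp (t • a) v =
      ∑ i ∈ Finset.range k, ((t : ℂ) ^ i * Complex.exp (μ * t) * (i ! : ℂ)⁻¹) • (N ^ i) v := by
    intro t
    have hsplit : t • a = algebraMap ℂ (E →L[ℂ] E) (μ * t) + (t : ℂ) • N := by
      rw [Algebra.algebraMap_eq_smul_one, smul_sub, smul_smul, Complex.coe_smul, mul_comm]
      abel
    have hNk : (((t : ℂ) • N) ^ k) v = 0 := by rw [smul_pow, _root_.smul_apply, hk, smul_zero]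
    -- `exp_add_of_commute` would need a `ℚ`-normed-algebra instance on `E →L[ℂ] E`
    have hball : ∀ x : E →L[ℂ] E, x ∈ Metric.eball 0 (expSeries ℂ (E →L[ℂ] E)).radius :=
      fun x => (expSeries_radius_eq_top ℂ (E →L[ℂ] E)).symm ▸ edist_lt_top _ _
    rw [hsplit, exp_add_of_commute_of_mem_ball (Algebra.commutes _ _) (hball _) (hball _),
      ← algebraMap_exp_comm, mul_apply_eq_comp, exp_apply_eq_sum_of_pow_apply_eq_zero hNk,
      Algebra.algebraMap_eq_smul_one, _root_.smul_apply, one_apply_eq_self, Finset.smul_sum,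
      ← Complex.exp_eq_exp_ℂ]
    refine Finset.sum_congr rfl fun i _ => ?_
    rw [smul_pow, _root_.smul_apply, smul_smul, smul_smul]
    ring_nf
  simpa [hexp] using tendsto_finsetSum (Finset.range k) fun i _ =>
    ((Complex.tendsto_pow_mul_exp_mul_atTop_nhds_zero hμ i).mul_const (i ! : ℂ)⁻¹).smul_const
      ((N ^ i) v)

theorem tendsto_exp_smul_apply_of_spectrum_re_neg [FiniteDimensional ℂ E] (a : E →L[ℂ] E)
    (ha : ∀ μ ∈ spectrum ℂ (a : Module.End ℂ E), μ.re < 0) (w : E) :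
    Tendsto (fun t : ℝ => exp (t • a) w) atTop (𝓝 0) := by
  have hw : w ∈ ⨆ μ, Module.End.maxGenEigenspace (a : Module.End ℂ E) μ := by
    rw [Module.End.iSup_maxGenEigenspace_eq_top]
    exact Submodule.mem_top
  refine Submodule.iSup_induction _ hw
    (motive := fun u => Tendsto (fun t : ℝ => exp (t • a) u) atTop (𝓝 0))
    (fun μ v hv => ?_) (by simp) fun u₁ u₂ h₁ h₂ => by simpa using h₁.add h₂
  rcases eq_or_ne v 0 with rfl | hv0
  · simp
  have hμ : μ ∈ spectrum ℂ (a : Module.End ℂ E) :=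
    ((Module.End.hasUnifEigenvalue_iff_hasUnifEigenvalue_one (by simp)).1
      ((Submodule.ne_bot_iff _).2 ⟨v, hv, hv0⟩)).mem_spectrum
  obtain ⟨k, hk⟩ := (Module.End.mem_maxGenEigenspace _ _ _).1 hv
  exact tendsto_exp_smul_apply_of_pow_sub_smul_apply_eq_zero a (ha μ hμ) (k := k)
    (by rwa [← ContinuousLinearMap.coe_coe, ContinuousLinearMap.toLinearMap_pow])

theorem eq_exp_smul_apply_of_hasDerivAt (a : E →L[ℂ] E) {f : ℝ → E}
    (hf : ∀ t, HasDerivAt f (a (f t)) t) : f = fun t => exp (t • a) (f 0) := by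
  have hexp : ∀ t : ℝ, HasDerivAt (fun τ : ℝ => exp (τ • a) (f 0)) (a (exp (t • a) (f 0))) t :=
    fun t => ((ContinuousLinearMap.apply ℂ E (f 0)).restrictScalars ℝ).hasFDerivAt.comp_hasDerivAt
      t (hasDerivAt_exp_smul_const' (𝕂 := ℝ) a t)
  exact ODE_solution_unique_univ (v := fun _ => a) (s := fun _ => Set.univ) (t₀ := 0)
    (fun _ => a.lipschitz.lipschitzOnWith) (fun t => ⟨hf t, trivial⟩)
    (fun t => ⟨hexp t, trivial⟩) (by simp)
end

theorem HasDerivAt.matrix_mulVec {𝕜 m n : Type*} [NontriviallyNormedField 𝕜] [CompleteSpace 𝕜]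
    [Fintype m] [Fintype n] (V : Matrix m n 𝕜) {x : 𝕜 → n → 𝕜} {x' : n → 𝕜} {t : 𝕜}
    (hx : HasDerivAt x x' t) : HasDerivAt (fun τ => V *ᵥ x τ) (V *ᵥ x') t :=
  V.mulVecLin.toContinuousLinearMap.hasFDerivAt.comp_hasDerivAt t hx

theorem Matrix.tendsto_atTop_nhds_zero_of_hasDerivAt_mulVec {ι : Type*} [Fintype ι]
    [DecidableEq ι] (H : Matrix ι ι ℝ) (hH : ∀ μ ∈ spectrum ℂ (H.map (algebraMap ℝ ℂ)), μ.re < 0)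
    {ε : ℝ → ι → ℝ} (hε : ∀ t, HasDerivAt ε (H *ᵥ ε t) t) : Tendsto ε atTop (𝓝 0) := by
  let a : (ι → ℂ) →L[ℂ] (ι → ℂ) :=
    LinearMap.toContinuousLinearMap (toLin' (H.map (algebraMap ℝ ℂ)))
  let J : (ι → ℝ) →L[ℝ] (ι → ℂ) :=
    ContinuousLinearMap.pi fun i => Complex.ofRealCLM.comp (ContinuousLinearMap.proj i)
  have hJ : ∀ v, J (H *ᵥ v) = a (J v) := fun v => funext fun i => by
    simpa [J, a, Function.comp_def] using RingHom.map_mulVec (algebraMap ℝ ℂ) H v i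
  have hJε : Tendsto (fun t => J (ε t)) atTop (𝓝 0) := by
    rw [eq_exp_smul_apply_of_hasDerivAt a (f := fun t => J (ε t)) fun t => by
      rw [← hJ]; exact J.hasFDerivAt.comp_hasDerivAt t (hε t)]
    refine tendsto_exp_smul_apply_of_spectrum_re_neg a ?_ _
    rwa [LinearMap.coe_toContinuousLinearMap, Matrix.spectrum_toLin']
  have hre : Continuous fun w : ι → ℂ => fun i => (w i).re := by fun_prop
  exact (hre.tendsto 0).comp hJε

/-- If the observer design equations `I = MV + NC` and `VA = HV + KC` hold,
then for the observer `ż = Hz + Ky`, `x̂ = Mz + Ny` (with `y = Cx`,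
`ẋ = Ax`), the signal `ε = z - Vx` satisfies `ε̇ = Hε` and the estimation
error satisfies `x̂ - x = Mε`.  In particular, if `H` is a stability matrix,
then `x̂(t) - x(t) → 0` as `t → ∞` for all initializations. -/
theorem observer_design_equations (n n1 s : ℕ)
    (A : Matrix (Fin n) (Fin n) ℝ) (C : Matrix (Fin s) (Fin n) ℝ)
    (H : Matrix (Fin n1) (Fin n1) ℝ) (K : Matrix (Fin n1) (Fin s) ℝ)
    (M : Matrix (Fin n) (Fin n1) ℝ) (N : Matrix (Fin n) (Fin s) ℝ)
    (V : Matrix (Fin n1) (Fin n) ℝ)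
    (hdes1 : M * V + N * C = 1)
    (hdes2 : V * A = H * V + K * C)
    (x : ℝ → Fin n → ℝ) (z : ℝ → Fin n1 → ℝ)
    (hx : ∀ t : ℝ, HasDerivAt x (A.mulVec (x t)) t)
    (hz : ∀ t : ℝ, HasDerivAt z (H.mulVec (z t) + K.mulVec (C.mulVec (x t))) t) :
    (∀ t : ℝ, HasDerivAt (fun τ => z τ - V.mulVec (x τ))
        (H.mulVec (z t - V.mulVec (x t))) t) ∧
    (∀ t : ℝ, M.mulVec (z t) + N.mulVec (C.mulVec (x t)) - x t
        = M.mulVec (z t - V.mulVec (x t))) ∧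
    ((∀ μ : ℂ, μ ∈ spectrum ℂ (H.map (algebraMap ℝ ℂ)) → μ.re < 0) →
      Filter.Tendsto (fun t => M.mulVec (z t) + N.mulVec (C.mulVec (x t)) - x t)
        Filter.atTop (nhds 0)) := by
  have hε : ∀ t, HasDerivAt (fun τ => z τ - V *ᵥ x τ) (H *ᵥ (z t - V *ᵥ x t)) t := by
    refine fun t => ((hz t).sub ((hx t).matrix_mulVec V)).congr_deriv ?_
    simp only [mulVec_mulVec, hdes2, add_mulVec, mulVec_sub]
    abel
  have herr : ∀ t, M *ᵥ z t + N *ᵥ (C *ᵥ x t) - x t = M *ᵥ (z t - V *ᵥ x t) := by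
    intro t
    conv_lhs => arg 2; rw [← one_mulVec (x t), ← hdes1]
    rw [add_mulVec, mulVec_sub, mulVec_mulVec, mulVec_mulVec]
    abel
  refine ⟨hε, herr, fun hH => ?_⟩
  have hMε := ((show Continuous (M *ᵥ ·) by fun_prop).tendsto 0).comp
    (Matrix.tendsto_atTop_nhds_zero_of_hasDerivAt_mulVec H hH hε)
  rw [mulVec_zero] at hMε
  exact hMε.congr fun t => (herr t).symm
end
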